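/- arXiv:0705.3537 — 3 statements merged into one kernel-verified Lean document; each statement's English description precedes it below -/
import Mathlib

section
/- Let D be a squarefree integer with D ≥ 2 and D ≡ 2 or 3 (mod 4), let p be a prime number, and let c1, c2 be integers with c2 ≠ 0 such that (c1 + c2·√D)² ≤ p and (c1 − c2·√D)² ≤ p (as real numbers). Set N = (1 + p − 2·c1)² − 4·c2²·D. Then p² does not divide N. -/
/-- Let D be a squarefree integer with D ≥ 2 and D ≡ 2 or 3 (mod 4), let p be a
prime number, and let c1, c2 be integers with c2 ≠ 0 such that (c1 + c2·√D)² ≤ p and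
(c1 − c2·√D)² ≤ p (as real numbers). Set N = (1 + p − 2·c1)² − 4·c2²·D. Then p² does not
divide N. -/
theorem stmt0 (D : ℤ) (hD : Squarefree D) (hD2 : 2 ≤ D) (hDmod : D % 4 = 2 ∨ D % 4 = 3)
    (p : ℕ) (hp : p.Prime) (c1 c2 : ℤ) (hc2 : c2 ≠ 0)
    (h1 : ((c1 : ℝ) + (c2 : ℝ) * Real.sqrt (D : ℝ)) ^ 2 ≤ (p : ℝ))
    (h2 : ((c1 : ℝ) - (c2 : ℝ) * Real.sqrt (D : ℝ)) ^ 2 ≤ (p : ℝ))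
    (N : ℤ) (hN : N = (1 + (p : ℤ) - 2 * c1) ^ 2 - 4 * c2 ^ 2 * D) :
    ¬ ((p : ℤ) ^ 2 ∣ N) := by
  intro hdvd
  -- Key bound: c1² + c2²·D ≤ p
  have hDR : (0:ℝ) ≤ (D:ℝ) := by positivity
  have hsq : Real.sqrt (D:ℝ) ^ 2 = (D:ℝ) := Real.sq_sqrt hDR
  have hkey : c1 ^ 2 + c2 ^ 2 * D ≤ (p : ℤ) := by
    have hR : ((c1:ℝ) ^ 2 + (c2:ℝ) ^ 2 * (D:ℝ)) ≤ (p:ℝ) := by nlinarith [h1, h2, hsq]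
    exact_mod_cast hR
  have hc2sq : (1:ℤ) ≤ c2 ^ 2 := by
    have hpos : (0:ℤ) < c2 ^ 2 := by positivity
    linarith
  have hc2D : (2:ℤ) ≤ c2 ^ 2 * D := by nlinarith
  have hc1 : c1 ^ 2 ≤ (p:ℤ) - 2 := by linarith
  rcases eq_or_ne p 2 with hp2 | hp2
  · -- p = 2 : N is odd
    subst hp2
    have h4 : (4:ℤ) ∣ N := by norm_num at hdvd ⊢; exact hdvd
    have hN' : N = 4 * (c1 ^ 2 - 3 * c1 - c2 ^ 2 * D) + 9 := by rw [hN]; push_cast; ring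
    obtain ⟨w, hw⟩ := h4
    set m := c1 ^ 2 - 3 * c1 - c2 ^ 2 * D with hm
    omega
  · -- p odd
    have hodd : Odd p := hp.odd_of_ne_two hp2
    obtain ⟨k, hk⟩ := hodd
    have hp3 : 3 ≤ (p:ℤ) := by
      have := hp.two_le
      omega
    obtain ⟨e, he⟩ : ∃ e : ℤ, e = (k : ℤ) + 1 - c1 := ⟨_, rfl⟩
    have h2e : 2 * e = 1 + (p:ℤ) - 2 * c1 := by
      have hpk : (p:ℤ) = 2 * k + 1 := by exact_mod_cast hk
      rw [he]; omega
    obtain ⟨t, ht⟩ : ∃ t : ℤ, t = e ^ 2 - c2 ^ 2 * D := ⟨_, rfl⟩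
    have hNt : N = 4 * t := by rw [hN, ht, ← h2e]; ring
    -- p² divides t
    have hcop : IsCoprime ((p:ℤ) ^ 2) (4:ℤ) := by
      have h2p : IsCoprime (2:ℤ) (p:ℤ) := by
        rw [Int.prime_two.coprime_iff_not_dvd]
        intro h
        have : (2:ℤ) ∣ 2 * k + 1 := by
          have : (p:ℤ) = 2 * k + 1 := by exact_mod_cast hk
          rwa [this] at h
        omega
      have : IsCoprime ((p:ℤ)) (2:ℤ) := h2p.symm
      have h4eq : (4:ℤ) = 2 ^ 2 := by norm_num
      rw [h4eq]
      exact IsCoprime.pow this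
    have hdt : (p:ℤ) ^ 2 ∣ t := by
      have h4t : (p:ℤ) ^ 2 ∣ 4 * t := hNt ▸ hdvd
      exact hcop.dvd_of_dvd_mul_left h4t
    -- t ≠ 0 since D is not a perfect square
    have htne : t ≠ 0 := by
      intro h0
      have heq : e ^ 2 = c2 ^ 2 * D := by linarith [ht ▸ h0]
      have hdvd2 : c2 ^ 2 ∣ e ^ 2 := ⟨D, heq⟩
      have hce : c2 ∣ e := (Int.pow_dvd_pow_iff two_ne_zero).mp hdvd2
      obtain ⟨f, hf⟩ := hce
      have hfD : f ^ 2 = D := by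
        have hc2sq' : c2 ^ 2 ≠ 0 := by positivity
        have : c2 ^ 2 * f ^ 2 = c2 ^ 2 * D := by rw [← heq, hf]; ring
        exact mul_left_cancel₀ hc2sq' this
      have : IsUnit f := hD f ⟨1, by rw [← hfD]; ring⟩
      rcases Int.isUnit_iff.mp this with h | h <;> rw [h] at hfD <;> omega
    -- bounds: |t| < p²
    have hebound : (2 * e) ^ 2 ≤ 4 * (p:ℤ) ^ 2 := by
      rw [h2e]
      nlinarith [sq_nonneg ((p:ℤ) - 3), sq_nonneg ((p:ℤ) - 1 - 2 * c1),
        sq_nonneg ((p:ℤ) - 1 + 2 * c1), hc1, hp3]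
    have htub : t ≤ (p:ℤ) ^ 2 - 2 := by nlinarith
    have htlb : -(p:ℤ) ≤ t := by nlinarith [sq_nonneg e, hkey, sq_nonneg c1]
    rcases htne.lt_or_gt with hlt | hgt
    · have hle : (p:ℤ) ^ 2 ≤ -t := Int.le_of_dvd (by linarith) (dvd_neg.mpr hdt)
      nlinarith
    · have hle : (p:ℤ) ^ 2 ≤ t := Int.le_of_dvd hgt hdt
      linarith
end

section
/- Let D be a squarefree integer with D ≥ 5 and D ≡ 1 (mod 4), let p be a prime number, and let c1, c2 be integers with c2 ≠ 0. Set c = 2·c1 + c2, and suppose (c + c2·√D)² ≤ 4·p and (c − c2·√D)² ≤ 4·p (as real numbers). Set N = (1 + p − c)² − c2²·D. Then p² does not divide N. -/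
lemma small_case (p : ℕ) (hp : p.Prime) (hple : p ≤ 28) (D c e N : ℤ)
    (hDmod : D % 4 = 1)
    (he : 5 ≤ e) (hK : c * c + e ≤ 4 * (p : ℤ)) (hc0 : c ≤ 0)
    (hpar : ((2:ℤ) ∣ c ∧ (4:ℤ) ∣ e) ∨ (¬ (2:ℤ) ∣ c ∧ (4:ℤ) ∣ (e - D)))
    (hN : N = (1 + (p : ℤ) - c) * (1 + (p : ℤ) - c) - e)
    (hdvd : ((p : ℤ) * (p : ℤ)) ∣ N) (hN2 : 2 * ((p : ℤ) * (p : ℤ)) ≤ N) : False := by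
  have hple' : (p : ℤ) ≤ 28 := by exact_mod_cast hple
  have hc10 : -10 ≤ c := by nlinarith [sq_nonneg (c + 11)]
  have h2 := hp.two_le
  interval_cases p <;> interval_cases c <;> omega

set_option maxHeartbeats 1600000 in
/-- Let D be a squarefree integer with D ≥ 5 and D ≡ 1 (mod 4), let p be a prime
number, and let c1, c2 be integers with c2 ≠ 0. Set c = 2·c1 + c2, and suppose
(c + c2·√D)² ≤ 4·p and (c − c2·√D)² ≤ 4·p (as real numbers). Set N = (1 + p − c)² − c2²·D.
Then p² does not divide N. -/
theorem stmt1 (D : ℤ) (hD : Squarefree D) (hD5 : 5 ≤ D) (hDmod : D % 4 = 1)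
    (p : ℕ) (hp : p.Prime) (c1 c2 : ℤ) (hc2 : c2 ≠ 0)
    (c : ℤ) (hc : c = 2 * c1 + c2)
    (h1 : ((c : ℝ) + (c2 : ℝ) * Real.sqrt (D : ℝ)) ^ 2 ≤ 4 * (p : ℝ))
    (h2 : ((c : ℝ) - (c2 : ℝ) * Real.sqrt (D : ℝ)) ^ 2 ≤ 4 * (p : ℝ))
    (N : ℤ) (hN : N = (1 + (p : ℤ) - c) ^ 2 - c2 ^ 2 * D) :
    ¬ ((p : ℤ) ^ 2 ∣ N) := by
  intro hdvd
  have hp2n : 2 ≤ p := hp.two_le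
  have hp2 : (2:ℤ) ≤ (p:ℤ) := by exact_mod_cast hp2n
  have hp2r : (2:ℝ) ≤ (p:ℝ) := by exact_mod_cast hp2n
  have hDr : (0:ℝ) ≤ (D:ℝ) := by
    have h : (0:ℤ) ≤ D := by linarith
    exact_mod_cast h
  have hs : Real.sqrt (D:ℝ) ^ 2 = (D:ℝ) := Real.sq_sqrt hDr
  -- key integer inequality : c^2 + c2^2 * D ≤ 4p
  have hexp : ((c:ℝ) + (c2:ℝ) * Real.sqrt (D:ℝ))^2 + ((c:ℝ) - (c2:ℝ) * Real.sqrt (D:ℝ))^2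
      = 2*(c:ℝ)^2 + 2*(c2:ℝ)^2*(D:ℝ) := by
    linear_combination 2*(c2:ℝ)^2*hs
  have Kr : (c:ℝ)^2 + (c2:ℝ)^2 * (D:ℝ) ≤ 4 * (p:ℝ) := by linarith [h1, h2, hexp]
  have K : c^2 + c2^2 * D ≤ 4 * (p:ℤ) := by exact_mod_cast Kr
  -- e = c2^2 * D ≥ 5
  have hc2sq : 1 ≤ c2^2 := by
    have h := Int.one_le_abs hc2
    nlinarith [sq_abs c2]
  have he5 : 5 ≤ c2^2 * D := by nlinarith
  -- N ≥ 0, via the two real factors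
  have hA : (c:ℝ) + (c2:ℝ) * Real.sqrt (D:ℝ) ≤ 1 + (p:ℝ) := by
    nlinarith [h1, sq_nonneg ((p:ℝ) - 1)]
  have hB : (c:ℝ) - (c2:ℝ) * Real.sqrt (D:ℝ) ≤ 1 + (p:ℝ) := by
    nlinarith [h2, sq_nonneg ((p:ℝ) - 1)]
  have hfac : ((1:ℝ) + (p:ℝ) - (c:ℝ))^2 - (c2:ℝ)^2*(D:ℝ) =
      ((1 + (p:ℝ)) - ((c:ℝ) + (c2:ℝ) * Real.sqrt (D:ℝ))) *
      ((1 + (p:ℝ)) - ((c:ℝ) - (c2:ℝ) * Real.sqrt (D:ℝ))) := by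
    linear_combination (c2:ℝ)^2*hs
  have hN0r : (0:ℝ) ≤ ((N:ℤ):ℝ) := by
    rw [hN]; push_cast; rw [hfac]
    exact mul_nonneg (by linarith) (by linarith)
  have hN0 : 0 ≤ N := by exact_mod_cast hN0r
  -- N ≠ 0 by squarefreeness of D
  have hNne : N ≠ 0 := by
    intro h0
    rw [h0] at hN
    have hsq : (1 + (p:ℤ) - c)^2 = c2^2 * D := by linarith
    have hdvd2 : c2 ^ 2 ∣ (1 + (p:ℤ) - c) ^ 2 := ⟨D, hsq⟩
    have hcd : c2 ∣ (1 + (p:ℤ) - c) := (Int.pow_dvd_pow_iff two_ne_zero).mp hdvd2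
    obtain ⟨m, hm⟩ := hcd
    have hDm : m^2 = D := by
      have h' : c2^2 * m^2 = c2^2 * D := by rw [← hsq, hm]; ring
      exact mul_left_cancel₀ (pow_ne_zero 2 hc2) h'
    have hu : IsUnit m := hD m ⟨1, by rw [← hDm]; ring⟩
    rcases Int.isUnit_iff.mp hu with h | h <;> rw [h] at hDm <;> simp at hDm <;> omega
  have hNpos : 0 < N := lt_of_le_of_ne hN0 (Ne.symm hNne)
  have hNp2 : (p:ℤ)^2 ≤ N := Int.le_of_dvd hNpos hdvd
  -- x = 1 + p - c ≥ p + 1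
  have hx0 : 0 ≤ 1 + (p:ℤ) - c := by
    by_contra hlt
    push_neg at hlt
    have h' : (p:ℤ) + 2 ≤ c := by linarith
    have h'' := mul_le_mul h' h' (by linarith) (by linarith)
    nlinarith [K, he5, h'', sq_nonneg (p:ℤ)]
  have hx2 : (1 + (p:ℤ) - c)^2 = N + c2^2 * D := by rw [hN]; ring
  have hxlb : (p:ℤ) + 1 ≤ 1 + (p:ℤ) - c := by
    by_contra hlt
    push_neg at hlt
    have hxle : 1 + (p:ℤ) - c ≤ (p:ℤ) := by linarith
    have h'' := mul_le_mul hxle hxle hx0 (by linarith : (0:ℤ) ≤ (p:ℤ))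
    nlinarith [hx2, hNp2, he5, h'']
  have hc0 : c ≤ 0 := by linarith
  -- parity facts
  have hpar : ((2:ℤ) ∣ c ∧ (4:ℤ) ∣ c2^2*D) ∨ (¬ (2:ℤ) ∣ c ∧ (4:ℤ) ∣ (c2^2*D - D)) := by
    rcases Int.even_or_odd c2 with ⟨m, hm⟩ | ⟨m, hm⟩
    · left
      constructor
      · have h' : c = 2*(c1 + m) := by omega
        exact ⟨c1 + m, h'⟩
      · have h' : c2^2*D = 4*(m^2*D) := by rw [hm]; ring
        exact ⟨m^2*D, h'⟩
    · right
      constructor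
      · rintro ⟨t, ht⟩
        omega
      · have h' : c2^2*D - D = 4*((m^2 + m)*D) := by rw [hm]; ring
        exact ⟨(m^2 + m)*D, h'⟩
  -- N < 2p^2
  have hclaim : N < 2 * (p:ℤ)^2 := by
    by_contra hge
    push_neg at hge
    have h2t : (p:ℤ)^2 - 6*(p:ℤ) + 9 ≤ 2*(1+(p:ℤ))*(-c) := by nlinarith [hx2, hge, K, he5]
    rcases le_or_gt 29 p with h29 | h28
    · have h29' : (29:ℤ) ≤ (p:ℤ) := by exact_mod_cast h29
      have hcsq : c^2 ≤ 4*(p:ℤ) - 5 := by linarith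
      have h3 : ((p:ℤ)-3)^2 ≤ 2*(1+(p:ℤ))*(-c) := by nlinarith [h2t]
      have h4 : (((p:ℤ)-3)^2)^2 ≤ (2*(1+(p:ℤ))*(-c))^2 :=
        pow_le_pow_left₀ (sq_nonneg _) h3 2
      have h5 : (2*(1+(p:ℤ))*(-c))^2 = 4*(1+(p:ℤ))^2*c^2 := by ring
      have h6 : 4*(1+(p:ℤ))^2*c^2 ≤ 4*(1+(p:ℤ))^2*(4*(p:ℤ)-5) := by
        apply mul_le_mul_of_nonneg_left hcsq
        positivity
      nlinarith [h4, h5, h6, mul_nonneg (sub_nonneg.mpr h29')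
        (pow_nonneg (by linarith : (0:ℤ) ≤ (p:ℤ)) 3),
        mul_nonneg (sub_nonneg.mpr h29') (pow_nonneg (by linarith : (0:ℤ) ≤ (p:ℤ)) 2)]
    · exact small_case p hp (by omega) D c (c2^2*D) N hDmod he5 (by nlinarith [K])
        hc0 hpar (by rw [hN]; ring) (by rw [← pow_two]; exact hdvd)
        (by rw [← pow_two]; exact hge)
  -- hence N = p^2
  have hppos : (0:ℤ) < (p:ℤ)^2 := by positivity
  have hNeq : N = (p:ℤ)^2 := by
    obtain ⟨k, hk⟩ := hdvd
    have hk1 : 1 ≤ k :=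
      le_of_mul_le_mul_left (by linarith [hNp2, hk] : (p:ℤ)^2 * 1 ≤ (p:ℤ)^2 * k) hppos
    have hk2 : k < 2 :=
      lt_of_mul_lt_mul_left (by linarith [hclaim, hk] : (p:ℤ)^2 * k < (p:ℤ)^2 * 2)
        (le_of_lt hppos)
    have hk3 : k = 1 := by omega
    rw [hk, hk3, mul_one]
  -- x = p + 1 exactly, so c = 0 and c2^2 D = 2p + 1
  have hxub : 1 + (p:ℤ) - c ≤ (p:ℤ) + 1 := by
    by_contra hgt
    push_neg at hgt
    have h' : (p:ℤ) + 2 ≤ 1 + (p:ℤ) - c := by linarith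
    have h'' := mul_le_mul h' h' (by linarith) (by linarith)
    nlinarith [hx2, hNeq, K, sq_nonneg c, h'']
  have hceq : c = 0 := by linarith
  have hee : c2^2*D = 2*(p:ℤ) + 1 := by
    rw [hceq] at hx2
    rw [hNeq] at hx2
    nlinarith [hx2]
  -- parity contradiction : 4 ∣ 2p+1 is impossible, and c = 0 is even
  rcases hpar with ⟨_, h4d⟩ | ⟨hodd, _⟩
  · obtain ⟨q, hq⟩ := h4d
    have h' : 4*q = 2*(p:ℤ)+1 := hq.symm.trans hee
    omega
  · exact hodd ⟨0, by omega⟩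
end

section
/- Let D, a, b, c1, c2, c3, c4 be integers and p a real number. Let s ≥ 0 be a real number with s² = D, and let u, v ≥ 0 be real numbers with u² = a + b·(1+s)/2 and v² = a + b·(1−s)/2. Define the complex numbers ω1 = (c1 + c2·(1+s)/2) + (c3 + c4·(1+s)/2)·u·i and ω3 = (c1 + c2·(1−s)/2) + (c3 + c4·(1−s)/2)·v·i, and suppose |ω1|² = p and |ω3|² = p. Set c = 2·c1 + c2. Then for every complex number X, (X − ω1)·(X − ω̄1)·(X − ω3)·(X − ω̄3) = X⁴ − 2·c·X³ + (2·p + c² − c2²·D)·X² − 2·c·p·X + p². -/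
open Complex ComplexConjugate

/-!
Each conjugate pair contributes the real quadratic factor `X² - 2 Re(ω) X + |ω|²`. Both factors
have constant term `p`, so the quartic is determined by the sum and the product of the real parts
`c₁ + c₂(1 ± s)/2`; these are `c` and `(c² - c₂² s²)/4 = (c² - c₂² D)/4`.
-/

theorem sub_mul_sub_conj (z X : ℂ) :
    (X - z) * (X - conj z) = X ^ 2 - 2 * (z.re : ℂ) * X + ((‖z‖ ^ 2 : ℝ) : ℂ) := by
  have htrace : z + conj z = 2 * (z.re : ℂ) := by rw [add_conj, ofReal_mul, ofReal_ofNat]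
  have hnorm : z * conj z = ((‖z‖ ^ 2 : ℝ) : ℂ) := by rw [mul_conj, ← Complex.sq_norm]
  linear_combination (-X) * htrace + hnorm

theorem conj_pairs_prod_eq_of_norm_sq_eq (z w X : ℂ) (p : ℝ)
    (hz : ‖z‖ ^ 2 = p) (hw : ‖w‖ ^ 2 = p) :
    (X - z) * (X - conj z) * (X - w) * (X - conj w)
      = X ^ 4 - 2 * (z.re + w.re : ℂ) * X ^ 3 + (2 * p + 4 * z.re * w.re) * X ^ 2
        - 2 * (z.re + w.re : ℂ) * p * X + (p : ℂ) ^ 2 := by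
  rw [mul_assoc _ (X - w), sub_mul_sub_conj, sub_mul_sub_conj, hz, hw]
  ring

theorem stmt3_general (D c1 c2 c3 c4 : ℤ) (p : ℝ)
    (s : ℝ) (hs : s ^ 2 = (D : ℝ))
    (u v : ℝ)
    (ω1 ω3 : ℂ)
    (hω1 : ω1 = (((c1 : ℝ) + (c2 : ℝ) * ((1 + s) / 2) : ℝ) : ℂ)
      + ((((c3 : ℝ) + (c4 : ℝ) * ((1 + s) / 2)) * u : ℝ) : ℂ) * Complex.I)
    (hω3 : ω3 = (((c1 : ℝ) + (c2 : ℝ) * ((1 - s) / 2) : ℝ) : ℂ)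
      + ((((c3 : ℝ) + (c4 : ℝ) * ((1 - s) / 2)) * v : ℝ) : ℂ) * Complex.I)
    (habs1 : ‖ω1‖ ^ 2 = p) (habs3 : ‖ω3‖ ^ 2 = p)
    (c : ℤ) (hc : c = 2 * c1 + c2) :
    ∀ X : ℂ, (X - ω1) * (X - (starRingEnd ℂ) ω1) * (X - ω3) * (X - (starRingEnd ℂ) ω3)
      = X ^ 4 - 2 * (c : ℂ) * X ^ 3
        + (2 * (p : ℂ) + (c : ℂ) ^ 2 - (c2 : ℂ) ^ 2 * (D : ℂ)) * X ^ 2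
        - 2 * (c : ℂ) * (p : ℂ) * X + (p : ℂ) ^ 2 := by
  intro X
  have hre1 : ω1.re = c1 + c2 * ((1 + s) / 2) := by simp [hω1]
  have hre3 : ω3.re = c1 + c2 * ((1 - s) / 2) := by simp [hω3]
  have hsC : (s : ℂ) ^ 2 = D := by exact_mod_cast congrArg ofReal hs
  have hcC : (c : ℂ) = 2 * c1 + c2 := by exact_mod_cast hc
  rw [conj_pairs_prod_eq_of_norm_sq_eq ω1 ω3 X p habs1 habs3, hre1, hre3]
  push_cast
  linear_combination (2 * X ^ 3 + 2 * (p : ℂ) * X - ((c : ℂ) + 2 * c1 + c2) * X ^ 2) * hcC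
    - (c2 : ℂ) ^ 2 * X ^ 2 * hsC

/-- characteristic polynomial identity in the case D ≡ 1 (mod 4). -/
theorem stmt3 (D a b c1 c2 c3 c4 : ℤ) (p : ℝ)
    (s : ℝ) (hs0 : 0 ≤ s) (hs : s ^ 2 = (D : ℝ))
    (u v : ℝ) (hu0 : 0 ≤ u) (hv0 : 0 ≤ v)
    (hu : u ^ 2 = (a : ℝ) + (b : ℝ) * ((1 + s) / 2))
    (hv : v ^ 2 = (a : ℝ) + (b : ℝ) * ((1 - s) / 2))
    (ω1 ω3 : ℂ)
    (hω1 : ω1 = (((c1 : ℝ) + (c2 : ℝ) * ((1 + s) / 2) : ℝ) : ℂ)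
      + ((((c3 : ℝ) + (c4 : ℝ) * ((1 + s) / 2)) * u : ℝ) : ℂ) * Complex.I)
    (hω3 : ω3 = (((c1 : ℝ) + (c2 : ℝ) * ((1 - s) / 2) : ℝ) : ℂ)
      + ((((c3 : ℝ) + (c4 : ℝ) * ((1 - s) / 2)) * v : ℝ) : ℂ) * Complex.I)
    (habs1 : ‖ω1‖ ^ 2 = p) (habs3 : ‖ω3‖ ^ 2 = p)
    (c : ℤ) (hc : c = 2 * c1 + c2) :
    ∀ X : ℂ, (X - ω1) * (X - (starRingEnd ℂ) ω1) * (X - ω3) * (X - (starRingEnd ℂ) ω3)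
      = X ^ 4 - 2 * (c : ℂ) * X ^ 3
        + (2 * (p : ℂ) + (c : ℂ) ^ 2 - (c2 : ℂ) ^ 2 * (D : ℂ)) * X ^ 2
        - 2 * (c : ℂ) * (p : ℂ) * X + (p : ℂ) ^ 2 :=
  stmt3_general D c1 c2 c3 c4 p s hs u v ω1 ω3 hω1 hω3 habs1 habs3 c hc
end
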